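/- For every simple type α built from Unit, Bool, products, and function types (no name type), there are only finitely many values of type α up to contextual equivalence; i.e., there exists a finite list of closed values of type α such that every closed simply-typed λ-calculus term of type α is contextually equivalent to some value in the list. -/

import Mathlib

/-! Types of the ν-calculus: Unit, Bool, the name type Nm, products and arrows. -/
inductive Ty : Type
  | unit : Ty
  | bool : Ty
  | nm : Ty
  | prod : Ty → Ty → Ty
  | arrow : Ty → Ty → Ty
  deriving DecidableEq

/-! Terms of the ν-calculus, with named variables (names and variables are ℕ). -/
inductive Tm : Type
  | var : ℕ → Tm
  | unit : Tm
  | tt : Tm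
  | ff : Tm
  | name : ℕ → Tm
  | gensym : Tm
  | lam : ℕ → Ty → Tm → Tm
  | app : Tm → Tm → Tm
  | pair : Tm → Tm → Tm
  | fst : Tm → Tm
  | snd : Tm → Tm
  | cond : Tm → Tm → Tm → Tm
  | letin : ℕ → Tm → Tm → Tm
  | eq : Tm → Tm → Tm
  deriving DecidableEq

/-- The finite set of name constants occurring in a term. -/
def AN : Tm → Finset ℕ
  | .name r => {r}
  | .lam _ _ M => AN M
  | .app M N => AN M ∪ AN N
  | .pair M N => AN M ∪ AN N
  | .fst M => AN M
  | .snd M => AN M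
  | .cond M N₁ N₂ => AN M ∪ AN N₁ ∪ AN N₂
  | .letin _ M N => AN M ∪ AN N
  | .eq M N => AN M ∪ AN N
  | _ => ∅

/-- Free variables of a term. -/
def FV : Tm → Finset ℕ
  | .var x => {x}
  | .lam x _ M => FV M \ {x}
  | .app M N => FV M ∪ FV N
  | .pair M N => FV M ∪ FV N
  | .fst M => FV M
  | .snd M => FV M
  | .cond M N₁ N₂ => FV M ∪ FV N₁ ∪ FV N₂
  | .letin x M N => FV M ∪ (FV N \ {x})
  | .eq M N => FV M ∪ FV N
  | _ => ∅

/-- Substitution of a closed term `V` for the variable `x` (no capture since `V` is closed). -/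
def subst (x : ℕ) (V : Tm) : Tm → Tm
  | .var y => if y = x then V else .var y
  | .lam y α M => if y = x then .lam y α M else .lam y α (subst x V M)
  | .app M N => .app (subst x V M) (subst x V N)
  | .pair M N => .pair (subst x V M) (subst x V N)
  | .fst M => .fst (subst x V M)
  | .snd M => .snd (subst x V M)
  | .cond M N₁ N₂ => .cond (subst x V M) (subst x V N₁) (subst x V N₂)
  | .letin y M N => .letin y (subst x V M) (if y = x then N else subst x V N)
  | .eq M N => .eq (subst x V M) (subst x V N)
  | t => t

/-- Values. -/
inductive IsValue : Tm → Prop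
  | var : ∀ x, IsValue (.var x)
  | unit : IsValue .unit
  | tt : IsValue .tt
  | ff : IsValue .ff
  | name : ∀ r, IsValue (.name r)
  | gensym : IsValue .gensym
  | lam : ∀ x α M, IsValue (.lam x α M)
  | pair : ∀ {V W}, IsValue V → IsValue W → IsValue (.pair V W)

/-- Typing contexts: ordered lists of variable/type pairs, later entries more recent. -/
abbrev Ctx := List (ℕ × Ty)

/-- Look up the most recent binding of `x` in `Γ`. -/
def lookupVar (Γ : Ctx) (x : ℕ) : Option Ty :=
  (Γ.reverse.find? (fun p => p.1 == x)).map Prod.snd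

/-- Typing judgement `Γ ⊢ M : α` of the ν-calculus. -/
inductive Typed : Ctx → Tm → Ty → Prop
  | var : ∀ {Γ x α}, lookupVar Γ x = some α → Typed Γ (.var x) α
  | unit : ∀ {Γ}, Typed Γ .unit .unit
  | tt : ∀ {Γ}, Typed Γ .tt .bool
  | ff : ∀ {Γ}, Typed Γ .ff .bool
  | name : ∀ {Γ} (r : ℕ), Typed Γ (.name r) .nm
  | gensym : ∀ {Γ}, Typed Γ .gensym (.arrow .unit .nm)
  | lam : ∀ {Γ x α β M}, Typed (Γ ++ [(x, α)]) M β → Typed Γ (.lam x α M) (.arrow α β)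
  | app : ∀ {Γ M N α β}, Typed Γ M (.arrow α β) → Typed Γ N α → Typed Γ (.app M N) β
  | pair : ∀ {Γ M N α β}, Typed Γ M α → Typed Γ N β → Typed Γ (.pair M N) (.prod α β)
  | fst : ∀ {Γ M α β}, Typed Γ M (.prod α β) → Typed Γ (.fst M) α
  | snd : ∀ {Γ M α β}, Typed Γ M (.prod α β) → Typed Γ (.snd M) β
  | cond : ∀ {Γ M N₁ N₂ α}, Typed Γ M .bool → Typed Γ N₁ α → Typed Γ N₂ α →
      Typed Γ (.cond M N₁ N₂) α
  | letin : ∀ {Γ x M N α β}, Typed Γ M α → Typed (Γ ++ [(x, α)]) N β →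
      Typed Γ (.letin x M N) β
  | eqNm : ∀ {Γ M N}, Typed Γ M .nm → Typed Γ N .nm → Typed Γ (.eq M N) .bool
  | eqBool : ∀ {Γ M N}, Typed Γ M .bool → Typed Γ N .bool → Typed Γ (.eq M N) .bool

/-- Big-step call-by-value evaluation on configurations `(G, M) ⇓ (G', V)` where `G`
is the set of names generated so far. -/
inductive Eval : Finset ℕ → Tm → Finset ℕ → Tm → Prop
  | val : ∀ {G V}, IsValue V → Eval G V G V
  | app : ∀ {G G₁ G₂ G₃ M N B V W x α},
      Eval G M G₁ (.lam x α B) → Eval G₁ N G₂ W → IsValue W →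
      Eval G₂ (subst x W B) G₃ V → Eval G (.app M N) G₃ V
  | gensym : ∀ {G G₁ G₂ M N} (r : ℕ),
      Eval G M G₁ .gensym → Eval G₁ N G₂ .unit → r ∉ G₂ →
      Eval G (.app M N) (insert r G₂) (.name r)
  | pair : ∀ {G G₁ G₂ M N V W},
      Eval G M G₁ V → Eval G₁ N G₂ W → Eval G (.pair M N) G₂ (.pair V W)
  | fst : ∀ {G G₁ M V W}, Eval G M G₁ (.pair V W) → Eval G (.fst M) G₁ V
  | snd : ∀ {G G₁ M V W}, Eval G M G₁ (.pair V W) → Eval G (.snd M) G₁ W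
  | condT : ∀ {G G₁ G₂ M N₁ N₂ V},
      Eval G M G₁ .tt → Eval G₁ N₁ G₂ V → Eval G (.cond M N₁ N₂) G₂ V
  | condF : ∀ {G G₁ G₂ M N₁ N₂ V},
      Eval G M G₁ .ff → Eval G₁ N₂ G₂ V → Eval G (.cond M N₁ N₂) G₂ V
  | letin : ∀ {G G₁ G₂ M N W V x},
      Eval G M G₁ W → IsValue W → Eval G₁ (subst x W N) G₂ V →
      Eval G (.letin x M N) G₂ V
  | eqT : ∀ {G G₁ G₂ M N r},
      Eval G M G₁ (.name r) → Eval G₁ N G₂ (.name r) → Eval G (.eq M N) G₂ .tt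
  | eqF : ∀ {G G₁ G₂ M N r s},
      Eval G M G₁ (.name r) → Eval G₁ N G₂ (.name s) → r ≠ s →
      Eval G (.eq M N) G₂ .ff
  | eqBoolT : ∀ {G G₁ G₂ M N b},
      Eval G M G₁ b → Eval G₁ N G₂ b → (b = Tm.tt ∨ b = Tm.ff) →
      Eval G (.eq M N) G₂ .tt
  | eqBoolF : ∀ {G G₁ G₂ M N b₁ b₂},
      Eval G M G₁ b₁ → Eval G₁ N G₂ b₂ →
      ((b₁ = Tm.tt ∧ b₂ = Tm.ff) ∨ (b₁ = Tm.ff ∧ b₂ = Tm.tt)) →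
      Eval G (.eq M N) G₂ .ff

/-- Types not mentioning the name type `Nm`. -/
def NmFreeTy : Ty → Prop
  | .nm => False
  | .prod a b => NmFreeTy a ∧ NmFreeTy b
  | .arrow a b => NmFreeTy a ∧ NmFreeTy b
  | _ => True

/-- Base types β ::= Unit | Bool | β × β. -/
inductive BaseTy : Ty → Prop
  | unit : BaseTy .unit
  | bool : BaseTy .bool
  | prod : ∀ {a b}, BaseTy a → BaseTy b → BaseTy (.prod a b)

/-- Terms with no occurrence of `gensym`. -/
def NoGensym : Tm → Prop
  | .gensym => False
  | .lam _ _ M => NoGensym M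
  | .app M N => NoGensym M ∧ NoGensym N
  | .pair M N => NoGensym M ∧ NoGensym N
  | .fst M => NoGensym M
  | .snd M => NoGensym M
  | .cond M N₁ N₂ => NoGensym M ∧ NoGensym N₁ ∧ NoGensym N₂
  | .letin _ M N => NoGensym M ∧ NoGensym N
  | .eq M N => NoGensym M ∧ NoGensym N
  | _ => True

/-- Logical expressions: variables, constants, pairing and projections. -/
def IsExpr : Tm → Prop
  | .var _ => True
  | .unit => True
  | .tt => True
  | .ff => True
  | .pair e e' => IsExpr e ∧ IsExpr e'
  | .fst e => IsExpr e
  | .snd e => IsExpr e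
  | _ => False

def boolVal : Bool → Tm
  | true => .tt
  | false => .ff

/-- Contextual equivalence of closed terms `M, N` of type `α` with names in `G`:
every boolean-valued closing context (a term with one free variable, the hole)
with names in `G` evaluates `M` and `N` to the same boolean. -/
def CtxEquiv (G : Finset ℕ) (α : Ty) (M N : Tm) : Prop :=
  ∀ (h : ℕ) (C : Tm) (b : Bool), Typed [(h, α)] C .bool → AN C ⊆ G →
    ((∃ G', Eval G (subst h M C) G' (boolVal b)) ↔
     (∃ G', Eval G (subst h N C) G' (boolVal b)))

/-- Models: finite maps from variables to closed values, as ordered lists. -/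
abbrev Model := List (ℕ × Tm)

/-- All names occurring in a model. -/
def ANModel (ξ : Model) : Finset ℕ := ξ.foldr (fun p s => AN p.2 ∪ s) ∅

/-- Closure of a term by a model: substitute each binding. -/
def msubst (ξ : Model) (M : Tm) : Tm := ξ.foldl (fun N p => subst p.1 p.2 N) M

/-- Look up the value of `x` in the model `ξ`. -/
def modelLookup (ξ : Model) (x : ℕ) : Option Tm :=
  (ξ.reverse.find? (fun p => p.1 == x)).map Prod.snd

/-- A model is typed by a context when it binds the same variables, in order,
to closed values of the corresponding types. -/
inductive ModelTyped : Ctx → Model → Prop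
  | nil : ModelTyped [] []
  | cons : ∀ {Γ ξ x α V}, IsValue V → Typed [] V α → ModelTyped Γ ξ →
      ModelTyped ((x, α) :: Γ) ((x, V) :: ξ)

/-- Single-step model extension: add one binding `y : V` where `V` is derived
from the current model by a name-free term. -/
def ModelExt1 (p q : Ctx × Model) : Prop :=
  ∃ (y : ℕ) (α : Ty) (M V : Tm) (G' : Finset ℕ),
    q.1 = p.1 ++ [(y, α)] ∧ q.2 = p.2 ++ [(y, V)] ∧
    AN M = ∅ ∧ Typed p.1 M α ∧ IsValue V ∧
    Eval (ANModel p.2) (msubst p.2 M) G' V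

/-- Model extension `ξ ⪯* ξ′`: reflexive-transitive closure of single steps. -/
def ModelExt : Ctx × Model → Ctx × Model → Prop := Relation.ReflTransGen ModelExt1

/-!
Interpret every type by a finite set `sem α` (all functions at arrow types) and relate closed
values to its elements by a logical relation. By the fundamental lemma, a closed STLC term `M : α`
evaluates to a value related to some `d : sem α`, and a context `C` with a hole of type `α` sends
related fillers to the same boolean. Conversely every `d` is denoted by a value `reify α d`: at an
arrow type it is a λ whose body branches on the meaning of its argument, read off by applying the
argument to the values denoting the finitely many points of the domain. Thus `C[M]` and
`C[reify α d]` evaluate to the same boolean, and since evaluation without `gensym` is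
deterministic, to no other. The values `reify α d`, `d : sem α`, are the required finite list.
-/

section Substitution

theorem subst_eq_self_of_notMem_FV {x : ℕ} {V N : Tm} (h : x ∉ FV N) : subst x V N = N := by
  induction N <;> simp_all [subst, FV] <;> grind

theorem subst_eq_self_of_FV_eq_empty {x : ℕ} {V N : Tm} (h : FV N = ∅) : subst x V N = N :=
  subst_eq_self_of_notMem_FV (by simp [h])

theorem mem_FV_subst {x y : ℕ} {V N : Tm} (hV : FV V = ∅) (hy : y ∈ FV (subst x V N)) :
    y ∈ FV N ∧ y ≠ x := by
  induction N <;> simp only [subst] at hy <;> (try split_ifs at hy) <;> simp_all [FV] <;> grind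

theorem NoGensym.subst {x : ℕ} {V N : Tm} (hV : NoGensym V) (hN : NoGensym N) :
    NoGensym (subst x V N) := by
  induction N <;> simp only [_root_.subst] <;> (try split_ifs) <;> simp_all [NoGensym]

end Substitution

section Typing

theorem lookupVar_append_singleton (Γ : Ctx) (x y : ℕ) (α : Ty) :
    lookupVar (Γ ++ [(x, α)]) y = if x = y then some α else lookupVar Γ y := by
  by_cases h : x = y <;> simp [lookupVar, h]

theorem Typed.isSome_lookupVar_of_mem_FV {Γ : Ctx} {M : Tm} {α : Ty} (h : Typed Γ M α)
    {y : ℕ} (hy : y ∈ FV M) : (lookupVar Γ y).isSome := by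
  induction h with
  | lam _ ih =>
    simp only [FV, Finset.mem_sdiff, Finset.mem_singleton] at hy
    simpa [lookupVar_append_singleton, Ne.symm hy.2] using ih hy.1
  | letin _ _ ihM ihN =>
    simp only [FV, Finset.mem_union, Finset.mem_sdiff, Finset.mem_singleton] at hy
    rcases hy with hy | hy
    · exact ihM hy
    · simpa [lookupVar_append_singleton, Ne.symm hy.2] using ihN hy.1
  | _ => simp_all [FV] <;> tauto

theorem Typed.FV_eq_empty {M : Tm} {α : Ty} (h : Typed [] M α) : FV M = ∅ :=
  Finset.eq_empty_of_forall_notMem fun _ hy => by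
    simpa [lookupVar] using h.isSome_lookupVar_of_mem_FV hy

end Typing

section Msubst

variable (ξ : Model)

theorem msubst_cons (p : ℕ × Tm) (M : Tm) :
    msubst (p :: ξ) M = msubst ξ (subst p.1 p.2 M) :=
  rfl

theorem msubst_append (ξ' : Model) (M : Tm) : msubst (ξ ++ ξ') M = msubst ξ' (msubst ξ M) := by
  simp [msubst]

theorem msubst_eq_self_of_FV_eq_empty {M : Tm} (h : FV M = ∅) : msubst ξ M = M := by
  induction ξ with
  | nil => rfl
  | cons p ξ ih => rw [msubst_cons, subst_eq_self_of_FV_eq_empty h, ih]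

theorem lookup_cons_eq_ite (z y : ℕ) (N : Tm) :
    ((z, N) :: ξ).lookup y = if y = z then some N else ξ.lookup y := by
  by_cases h : y = z
  · simp [h]
  · simp [List.lookup, beq_eq_false_iff_ne.mpr h, h]

theorem msubst_var (hξ : ∀ p ∈ ξ, FV p.2 = ∅) (y : ℕ) :
    msubst ξ (.var y) = (ξ.lookup y).getD (.var y) := by
  induction ξ with
  | nil => rfl
  | cons p ξ ih =>
    obtain ⟨z, N⟩ := p
    by_cases h : y = z
    · simp [msubst_cons, subst, h, msubst_eq_self_of_FV_eq_empty _ (hξ _ List.mem_cons_self)]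
    · simp_all [msubst_cons, subst, lookup_cons_eq_ite]

theorem msubst_app (M N : Tm) : msubst ξ (.app M N) = .app (msubst ξ M) (msubst ξ N) := by
  induction ξ generalizing M N with
  | nil => rfl
  | cons p ξ ih => exact ih _ _

theorem msubst_pair (M N : Tm) : msubst ξ (.pair M N) = .pair (msubst ξ M) (msubst ξ N) := by
  induction ξ generalizing M N with
  | nil => rfl
  | cons p ξ ih => exact ih _ _

theorem msubst_fst (M : Tm) : msubst ξ (.fst M) = .fst (msubst ξ M) := by
  induction ξ generalizing M with
  | nil => rfl
  | cons p ξ ih => exact ih _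

theorem msubst_snd (M : Tm) : msubst ξ (.snd M) = .snd (msubst ξ M) := by
  induction ξ generalizing M with
  | nil => rfl
  | cons p ξ ih => exact ih _

theorem msubst_cond (M N₁ N₂ : Tm) :
    msubst ξ (.cond M N₁ N₂) = .cond (msubst ξ M) (msubst ξ N₁) (msubst ξ N₂) := by
  induction ξ generalizing M N₁ N₂ with
  | nil => rfl
  | cons p ξ ih => exact ih _ _ _

theorem msubst_eq (M N : Tm) : msubst ξ (.eq M N) = .eq (msubst ξ M) (msubst ξ N) := by
  induction ξ generalizing M N with
  | nil => rfl
  | cons p ξ ih => exact ih _ _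

theorem msubst_lam (x : ℕ) (α : Ty) (M : Tm) :
    msubst ξ (.lam x α M) = .lam x α (msubst (ξ.filter (x != ·.1)) M) := by
  induction ξ generalizing M with
  | nil => rfl
  | cons p ξ ih =>
    obtain ⟨z, N⟩ := p
    by_cases h : x = z
    · subst h; simp [msubst_cons, subst, ih]
    · simp [msubst_cons, subst, h, ih]

theorem msubst_letin (x : ℕ) (M N : Tm) :
    msubst ξ (.letin x M N) = .letin x (msubst ξ M) (msubst (ξ.filter (x != ·.1)) N) := by
  induction ξ generalizing M N with
  | nil => rfl
  | cons p ξ ih =>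
    obtain ⟨z, N⟩ := p
    by_cases h : x = z
    · subst h; simp [msubst_cons, subst, ih]
    · simp [msubst_cons, subst, h, ih]

theorem lookup_filter_ne (x y : ℕ) :
    (ξ.filter (x != ·.1)).lookup y = if y = x then none else ξ.lookup y := by
  induction ξ with
  | nil => simp
  | cons p ξ ih =>
    obtain ⟨z, N⟩ := p
    by_cases h : x = z
    · subst h; simp_all [lookup_cons_eq_ite]
    · simp only [List.filter_cons, bne_iff_ne, ne_eq, h, not_false_eq_true, if_true,
        lookup_cons_eq_ite, ih]
      grind

theorem mem_FV_msubst (hξ : ∀ p ∈ ξ, FV p.2 = ∅) {M : Tm} {y : ℕ}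
    (hy : y ∈ FV (msubst ξ M)) :
    y ∈ FV M ∧ ξ.lookup y = none := by
  induction ξ generalizing M with
  | nil => exact ⟨hy, rfl⟩
  | cons p ξ ih =>
    obtain ⟨z, N⟩ := p
    have ⟨hy₁, hy₂⟩ := ih (fun q hq => hξ q (List.mem_cons_of_mem _ hq)) hy
    have := mem_FV_subst (hξ _ List.mem_cons_self) hy₁
    exact ⟨this.1, by rw [lookup_cons_eq_ite, if_neg this.2, hy₂]⟩

end Msubst

def IsStlc (M : Tm) : Prop := AN M = ∅ ∧ NoGensym M

section IsStlc

variable {x : ℕ} {M N N₁ N₂ : Tm}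

theorem isStlc_app : IsStlc (.app M N) ↔ IsStlc M ∧ IsStlc N := by
  simp [IsStlc, AN, NoGensym]; tauto

theorem isStlc_pair : IsStlc (.pair M N) ↔ IsStlc M ∧ IsStlc N := by
  simp [IsStlc, AN, NoGensym]; tauto

theorem isStlc_cond : IsStlc (.cond M N₁ N₂) ↔ IsStlc M ∧ IsStlc N₁ ∧ IsStlc N₂ := by
  simp [IsStlc, AN, NoGensym]; tauto

theorem isStlc_letin : IsStlc (.letin x M N) ↔ IsStlc M ∧ IsStlc N := by
  simp [IsStlc, AN, NoGensym]; tauto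

theorem isStlc_eq : IsStlc (.eq M N) ↔ IsStlc M ∧ IsStlc N := by
  simp [IsStlc, AN, NoGensym]; tauto

end IsStlc

section Evaluation

theorem Eval.eq_of_isValue {G G' : Finset ℕ} {M V : Tm} (h : Eval G M G' V) (hM : IsValue M) :
    G' = G ∧ V = M := by
  induction h with
  | val => exact ⟨rfl, rfl⟩
  | pair _ _ ihM ihN =>
    cases hM with
    | pair hV hW =>
      obtain ⟨rfl, rfl⟩ := ihM hV
      obtain ⟨rfl, rfl⟩ := ihN hW
      exact ⟨rfl, rfl⟩
  | _ => cases hM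

theorem Eval.noGensym {G G' : Finset ℕ} {M V : Tm} (h : Eval G M G' V) (hM : NoGensym M) :
    NoGensym V := by
  induction h with
  | val => exact hM
  | app _ _ _ _ ihM ihN ihB => exact ihB ((ihN hM.2).subst (ihM hM.1))
  | gensym _ _ _ _ ihM => exact (ihM hM.1).elim
  | pair _ _ ihM ihN => exact ⟨ihM hM.1, ihN hM.2⟩
  | fst _ ih => exact (ih hM).1
  | snd _ ih => exact (ih hM).2
  | condT _ _ _ ih => exact ih hM.2.1
  | condF _ _ _ ih => exact ih hM.2.2
  | letin _ _ _ ihM ihN => exact ihN ((ihM hM.1).subst hM.2)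
  | _ => trivial

theorem Eval.det {G G₁ G₂ : Finset ℕ} {M V₁ V₂ : Tm} (h₁ : Eval G M G₁ V₁)
    (hM : NoGensym M) (h₂ : Eval G M G₂ V₂) : G₁ = G₂ ∧ V₁ = V₂ := by
  induction h₁ generalizing G₂ V₂ with
  | val hv => exact (h₂.eq_of_isValue hv).imp Eq.symm Eq.symm
  | app hM₁ _ _ _ ihM ihN ihB =>
    cases h₂ with
    | val hv => cases hv
    | app hM' hN' _ hB' =>
      obtain ⟨rfl, ⟨⟩⟩ := ihM hM.1 hM'
      obtain ⟨rfl, rfl⟩ := ihN hM.2 hN'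
      exact ihB (NoGensym.subst (hN'.noGensym hM.2) (hM₁.noGensym hM.1)) hB'
    | gensym _ hM' => cases (ihM hM.1 hM').2
  | gensym _ hM₁ => exact ((hM₁.noGensym hM.1)).elim
  | pair hM₁ hN₁ ihM ihN =>
    cases h₂ with
    | val hv => exact (Eval.pair hM₁ hN₁).eq_of_isValue hv
    | pair hM' hN' =>
      obtain ⟨rfl, rfl⟩ := ihM hM.1 hM'
      obtain ⟨rfl, rfl⟩ := ihN hM.2 hN'
      exact ⟨rfl, rfl⟩
  | fst _ ih =>
    cases h₂ with
    | val hv => cases hv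
    | fst hM' => obtain ⟨rfl, ⟨⟩⟩ := ih hM hM'; exact ⟨rfl, rfl⟩
  | snd _ ih =>
    cases h₂ with
    | val hv => cases hv
    | snd hM' => obtain ⟨rfl, ⟨⟩⟩ := ih hM hM'; exact ⟨rfl, rfl⟩
  | condT _ _ ihM ihN =>
    cases h₂ with
    | val hv => cases hv
    | condT hM' hN' => obtain ⟨rfl, -⟩ := ihM hM.1 hM'; exact ihN hM.2.1 hN'
    | condF hM' => cases (ihM hM.1 hM').2
  | condF _ _ ihM ihN =>
    cases h₂ with
    | val hv => cases hv
    | condT hM' => cases (ihM hM.1 hM').2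
    | condF hM' hN' => obtain ⟨rfl, -⟩ := ihM hM.1 hM'; exact ihN hM.2.2 hN'
  | letin hM₁ _ _ ihM ihN =>
    cases h₂ with
    | val hv => cases hv
    | letin hM' _ hN' =>
      obtain ⟨rfl, rfl⟩ := ihM hM.1 hM'
      exact ihN ((hM₁.noGensym hM.1).subst hM.2) hN'
  | eqT _ _ ihM ihN | eqF _ _ _ ihM ihN | eqBoolT _ _ _ ihM ihN | eqBoolF _ _ _ ihM ihN =>
    cases h₂ with
    | val hv => cases hv
    | eqT hM' hN' | eqF hM' hN' | eqBoolT hM' hN' | eqBoolF hM' hN' =>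
      obtain ⟨rfl, e₁⟩ := ihM hM.1 hM'
      obtain ⟨rfl, e₂⟩ := ihN hM.2 hN'
      grind

end Evaluation

section Semantics

@[reducible] def sem : Ty → Type
  | .unit => Unit
  | .bool => Bool
  | .nm => Unit
  | .prod α β => sem α × sem β
  | .arrow α β => sem α → sem β

instance sem.inhabited : (α : Ty) → Inhabited (sem α)
  | .unit | .nm => ⟨()⟩
  | .bool => ⟨true⟩
  | .prod α β => ⟨((sem.inhabited α).default, (sem.inhabited β).default)⟩
  | .arrow _ β => ⟨fun _ => (sem.inhabited β).default⟩

instance sem.finite : ∀ α : Ty, Finite (sem α)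
  | .unit | .nm => inferInstanceAs (Finite Unit)
  | .bool => inferInstanceAs (Finite Bool)
  | .prod α β => have := sem.finite α; have := sem.finite β; inferInstance
  | .arrow α β => have := sem.finite α; have := sem.finite β; inferInstance

noncomputable def sem.enum (α : Ty) : List (sem α) :=
  haveI := Fintype.ofFinite (sem α); Finset.univ.toList

theorem sem.mem_enum {α : Ty} (d : sem α) : d ∈ sem.enum α := by
  simp [sem.enum]

def ValRel : (α : Ty) → Tm → sem α → Prop
  | .unit, V, _ => V = .unit
  | .bool, V, b => V = boolVal b
  | .nm, _, _ => False
  | .prod α β, V, d =>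
    ∃ V₁ V₂, V = .pair V₁ V₂ ∧ ValRel α V₁ d.1 ∧ ValRel β V₂ d.2
  | .arrow α β, V, f =>
    FV V = ∅ ∧ ∃ x γ B, V = .lam x γ B ∧
      ∀ W d, ValRel α W d → ∃ U, Eval ∅ (subst x W B) ∅ U ∧ ValRel β U (f d)

def TmRel (α : Ty) (M : Tm) (d : sem α) : Prop := ∃ V, Eval ∅ M ∅ V ∧ ValRel α V d

theorem ValRel.isValue_and_FV_eq_empty :
    ∀ {α : Ty} {V : Tm} {d : sem α}, ValRel α V d → IsValue V ∧ FV V = ∅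
  | .unit, _, _, rfl => ⟨.unit, rfl⟩
  | .bool, _, b, rfl => by cases b <;> exact ⟨by constructor, rfl⟩
  | .prod _ _, _, _, ⟨_, _, rfl, h₁, h₂⟩ => by
    obtain ⟨hv₁, hc₁⟩ := h₁.isValue_and_FV_eq_empty
    obtain ⟨hv₂, hc₂⟩ := h₂.isValue_and_FV_eq_empty
    exact ⟨.pair hv₁ hv₂, by simp [FV, hc₁, hc₂]⟩
  | .arrow _ _, _, _, ⟨hc, _, _, _, rfl, _⟩ => ⟨.lam _ _ _, hc⟩

theorem TmRel.of_valRel {α : Ty} {V : Tm} {d : sem α} (h : ValRel α V d) : TmRel α V d :=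
  ⟨V, .val h.isValue_and_FV_eq_empty.1, h⟩

variable {α β : Ty} {M N N₁ N₂ : Tm}

theorem TmRel.pair {d : sem α} {e : sem β} (hM : TmRel α M d) (hN : TmRel β N e) :
    TmRel (.prod α β) (.pair M N) (d, e) :=
  let ⟨_, hV, hR⟩ := hM; let ⟨_, hW, hR'⟩ := hN; ⟨_, .pair hV hW, _, _, rfl, hR, hR'⟩

theorem TmRel.fst {d : sem (.prod α β)} (h : TmRel (.prod α β) M d) : TmRel α (.fst M) d.1 :=
  let ⟨_, hV, _, _, rfl, hR, _⟩ := h; ⟨_, .fst hV, hR⟩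

theorem TmRel.snd {d : sem (.prod α β)} (h : TmRel (.prod α β) M d) : TmRel β (.snd M) d.2 :=
  let ⟨_, hV, _, _, rfl, _, hR⟩ := h; ⟨_, .snd hV, hR⟩

theorem TmRel.app {f : sem (.arrow α β)} {d : sem α} (hM : TmRel (.arrow α β) M f)
    (hN : TmRel α N d) : TmRel β (.app M N) (f d) := by
  obtain ⟨_, hV, -, _, _, _, rfl, hB⟩ := hM
  obtain ⟨W, hW, hR⟩ := hN
  obtain ⟨U, hU, hRU⟩ := hB W d hR
  exact ⟨U, .app hV hW hR.isValue_and_FV_eq_empty.1 hU, hRU⟩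

theorem TmRel.cond {b : Bool} {d₁ d₂ : sem α} (hM : TmRel .bool M b)
    (h₁ : TmRel α N₁ d₁) (h₂ : TmRel α N₂ d₂) :
    TmRel α (.cond M N₁ N₂) (bif b then d₁ else d₂) := by
  obtain ⟨_, hV, rfl⟩ := hM
  cases b
  · obtain ⟨U, hU, hR⟩ := h₂; exact ⟨U, .condF hV hU, hR⟩
  · obtain ⟨U, hU, hR⟩ := h₁; exact ⟨U, .condT hV hU, hR⟩

theorem TmRel.eq {b₁ b₂ : Bool} (hM : TmRel .bool M b₁) (hN : TmRel .bool N b₂) :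
    TmRel .bool (.eq M N) (b₁ == b₂) := by
  obtain ⟨_, hV, rfl⟩ := hM
  obtain ⟨_, hW, rfl⟩ := hN
  cases b₁ <;> cases b₂
  · exact ⟨_, .eqBoolT hV hW (.inr rfl), rfl⟩
  · exact ⟨_, .eqBoolF hV hW (.inr ⟨rfl, rfl⟩), rfl⟩
  · exact ⟨_, .eqBoolF hV hW (.inl ⟨rfl, rfl⟩), rfl⟩
  · exact ⟨_, .eqBoolT hV hW (.inl rfl), rfl⟩

theorem TmRel.letin {x : ℕ} {d : sem α} {e : sem β} (hM : TmRel α M d)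
    (hN : ∀ W, ValRel α W d → TmRel β (subst x W N) e) : TmRel β (.letin x M N) e := by
  obtain ⟨W, hW, hR⟩ := hM
  obtain ⟨U, hU, hRU⟩ := hN W hR
  exact ⟨U, .letin hW hR.isValue_and_FV_eq_empty.1 hU, hRU⟩

end Semantics

section Reify

-- Branches on the values of `t` at the points `xs`, passing to `k` a function that agrees
-- with them on `xs`.
open scoped Classical in
noncomputable def caseOnPoints {A B : Type} [Inhabited B] (reifyA : A → Tm)
    (caseB : Tm → (B → Tm) → Tm) (t : Tm) : List A → ((A → B) → Tm) → Tm
  | [], k => k fun _ => default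
  | x :: xs, k =>
    caseB (.app t (reifyA x)) fun y =>
      caseOnPoints reifyA caseB t xs fun g => k (Function.update g x y)

-- Binding the fixed variable `0` captures nothing: the branches `reify β (f d)` are closed.
mutual
noncomputable def reify : (α : Ty) → sem α → Tm
  | .unit, _ => .unit
  | .bool, b => boolVal b
  | .nm, _ => .unit
  | .prod α β, d => .pair (reify α d.1) (reify β d.2)
  | .arrow α β, f => .lam 0 α (caseOn α (.var 0) fun d => reify β (f d))

noncomputable def caseOn : (α : Ty) → Tm → (sem α → Tm) → Tm
  | .unit, _, k => k ()
  | .bool, t, k => .cond t (k true) (k false)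
  | .nm, _, k => k ()
  | .prod α β, t, k => caseOn α (.fst t) fun x => caseOn β (.snd t) fun y => k (x, y)
  | .arrow α β, t, k => caseOnPoints (reify α) (caseOn β) t (sem.enum α) k
end

section CaseOnPoints

variable {A B : Type} [Inhabited B] (reifyA : A → Tm) (caseB : Tm → (B → Tm) → Tm) (t : Tm)

theorem caseOnPoints_induction {P Q : Tm → Prop}
    (hcase : ∀ s h, Q s → (∀ y, P (h y)) → P (caseB s h))
    (happ : ∀ x, Q (.app t (reifyA x))) :
    ∀ (xs : List A) {k : (A → B) → Tm},
      (∀ g, P (k g)) → P (caseOnPoints reifyA caseB t xs k)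
  | [], _, hk => hk _
  | x :: xs, _, hk =>
    hcase _ _ (happ x) fun _ => caseOnPoints_induction hcase happ xs fun _ => hk _

theorem subst_caseOnPoints {x : ℕ} {V : Tm}
    (hcase : ∀ s h, subst x V (caseB s h) = caseB (subst x V s) fun y => subst x V (h y))
    (hreify : ∀ a, subst x V (reifyA a) = reifyA a) :
    ∀ (xs : List A) (k : (A → B) → Tm), subst x V (caseOnPoints reifyA caseB t xs k) =
      caseOnPoints reifyA caseB (subst x V t) xs fun g => subst x V (k g)
  | [], _ => rfl
  | a :: xs, k => by
    simp only [caseOnPoints, hcase, subst, hreify, subst_caseOnPoints hcase hreify xs]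

end CaseOnPoints

open scoped Classical in
theorem caseOnPoints_tmRel {a b c : Ty} (reifyA : sem a → Tm)
    (caseB : Tm → (sem b → Tm) → Tm) {t : Tm} {f : sem a → sem b}
    (hcase : ∀ s h d (K : sem b → sem c), TmRel b s d → (∀ y, TmRel c (h y) (K y)) →
      TmRel c (caseB s h) (K d))
    (happ : ∀ x, TmRel b (.app t (reifyA x)) (f x)) :
    ∀ (xs : List (sem a)) {k : (sem a → sem b) → Tm} (K : (sem a → sem b) → sem c),
      (∀ g, TmRel c (k g) (K g)) →
      TmRel c (caseOnPoints reifyA caseB t xs k) (K fun z => if z ∈ xs then f z else default)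
  | [], _, K, hk => by simpa [caseOnPoints] using hk _
  | x :: xs, _, K, hk => by
    have hupd : Function.update (fun z => if z ∈ xs then f z else default) x (f x) =
        fun z => if z ∈ x :: xs then f z else default := by
      funext z; by_cases hz : z = x <;> simp [Function.update, hz]
    rw [← hupd]
    exact hcase _ _ (f x) (fun y => K (Function.update _ x y)) (happ x)
      fun y => caseOnPoints_tmRel reifyA caseB hcase happ xs _ fun g => hk _


theorem isValue_reify : ∀ (α : Ty) (d : sem α), IsValue (reify α d)
  | .unit, _ | .nm, _ => .unit
  | .bool, b => by cases b <;> constructor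
  | .prod α β, d => .pair (isValue_reify α d.1) (isValue_reify β d.2)
  | .arrow _ _, _ => .lam _ _ _

mutual
theorem typed_reify :
    ∀ {α : Ty}, NmFreeTy α → ∀ (d : sem α) (Γ : Ctx), Typed Γ (reify α d) α
  | .unit, _, _, _ => .unit
  | .bool, _, b, _ => by cases b <;> constructor
  | .prod _ _, h, d, Γ => .pair (typed_reify h.1 d.1 Γ) (typed_reify h.2 d.2 Γ)
  | .arrow _ _, h, f, Γ => .lam <| typed_caseOn h.1 (.var (by simp [lookupVar]))
      fun d => typed_reify h.2 (f d) _

theorem typed_caseOn :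
    ∀ {α : Ty}, NmFreeTy α → ∀ {Γ : Ctx} {t : Tm} {k : sem α → Tm} {c : Ty},
    Typed Γ t α → (∀ d, Typed Γ (k d) c) → Typed Γ (caseOn α t k) c
  | .unit, _, _, _, _, _, _, hk => hk ()
  | .bool, _, _, _, _, _, ht, hk => .cond ht (hk true) (hk false)
  | .prod _ _, h, _, _, _, _, ht, hk =>
    typed_caseOn h.1 ht.fst fun _ => typed_caseOn h.2 ht.snd fun _ => hk _
  | .arrow α β, h, Γ, t, _, c, ht, hk =>
    caseOnPoints_induction (reify α) (caseOn β) t (P := (Typed Γ · c))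
      (fun _ _ hs => typed_caseOn h.2 hs) (fun x => ht.app (typed_reify h.1 x _)) _ hk
end

theorem FV_reify {α : Ty} (hα : NmFreeTy α) (d : sem α) : FV (reify α d) = ∅ :=
  (typed_reify hα d []).FV_eq_empty

mutual
theorem isStlc_reify : ∀ (α : Ty) (d : sem α), IsStlc (reify α d)
  | .unit, _ | .nm, _ => ⟨rfl, trivial⟩
  | .bool, b => by cases b <;> exact ⟨rfl, trivial⟩
  | .prod α β, d => isStlc_pair.2 ⟨isStlc_reify α d.1, isStlc_reify β d.2⟩
  | .arrow α β, f => isStlc_caseOn α ⟨rfl, trivial⟩ fun d => isStlc_reify β (f d)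

theorem isStlc_caseOn : ∀ (α : Ty) {t : Tm} {k : sem α → Tm},
    IsStlc t → (∀ d, IsStlc (k d)) → IsStlc (caseOn α t k)
  | .unit, _, _, _, hk | .nm, _, _, _, hk => hk ()
  | .bool, _, _, ht, hk => isStlc_cond.2 ⟨ht, hk true, hk false⟩
  | .prod α β, _, _, ht, hk =>
    isStlc_caseOn α ht fun _ => isStlc_caseOn β ht fun _ => hk _
  | .arrow α β, t, _, ht, hk =>
    caseOnPoints_induction (reify α) (caseOn β) t (P := IsStlc)
      (fun _ _ hs => isStlc_caseOn β hs) (fun x => isStlc_app.2 ⟨ht, isStlc_reify α x⟩) _ hk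
end

theorem subst_caseOn {x : ℕ} {V : Tm} :
    ∀ {α : Ty}, NmFreeTy α → ∀ (t : Tm) (k : sem α → Tm),
    subst x V (caseOn α t k) = caseOn α (subst x V t) fun d => subst x V (k d)
  | .unit, _, _, _ | .bool, _, _, _ => rfl
  | .prod _ _, h, t, k => by
    simp only [caseOn, subst_caseOn h.1, subst_caseOn h.2]; rfl
  | .arrow _ _, h, t, k => subst_caseOnPoints _ _ _ (subst_caseOn h.2)
      (fun d => subst_eq_self_of_FV_eq_empty (FV_reify h.1 d)) _ _

mutual
theorem valRel_reify : ∀ {α : Ty}, NmFreeTy α → ∀ d : sem α, ValRel α (reify α d) d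
  | .unit, _, _ => rfl
  | .bool, _, _ => rfl
  | .prod _ _, h, d => ⟨_, _, rfl, valRel_reify h.1 d.1, valRel_reify h.2 d.2⟩
  | .arrow α β, h, f => by
    refine ⟨FV_reify h f, 0, α, _, rfl, fun W d hW => ?_⟩
    rw [subst_caseOn h.1]
    simp only [subst, if_pos, subst_eq_self_of_FV_eq_empty (FV_reify h.2 _)]
    exact tmRel_caseOn h.1 (.of_valRel hW) fun e => .of_valRel (valRel_reify h.2 (f e))

theorem tmRel_caseOn : ∀ {α : Ty}, NmFreeTy α → ∀ {c : Ty} {t : Tm} {k : sem α → Tm}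
    {K : sem α → sem c} {d : sem α},
      TmRel α t d → (∀ e, TmRel c (k e) (K e)) → TmRel c (caseOn α t k) (K d)
  | .unit, _, _, _, _, _, _, _, hk => hk ()
  | .bool, _, _, _, _, _, d, ht, hk => by
    cases d <;> exact TmRel.cond ht (hk true) (hk false)
  | .prod _ _, h, _, _, _, K, d, ht, hk =>
    tmRel_caseOn (K := fun x => K (x, d.2)) h.1 ht.fst fun x =>
      tmRel_caseOn (K := fun y => K (x, y)) h.2 ht.snd fun y => hk (x, y)
  | .arrow _ _, h, _, _, _, K, f, ht, hk => by
    simpa [caseOn, sem.mem_enum] using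
      caseOnPoints_tmRel _ _ (fun _ _ _ _ hs => tmRel_caseOn h.2 hs)
      (fun x => ht.app (.of_valRel (valRel_reify h.1 x))) (sem.enum _) K hk
end

end Reify

section Fundamental

abbrev Env : Type := ℕ → (α : Ty) → sem α

def Env.update (ρ : Env) (x : ℕ) (α : Ty) (d : sem α) : Env :=
  Function.update ρ x (Function.update (ρ x) α d)

-- Entries are closed terms, not values: a context's hole is filled by an unevaluated term.
def EnvRel (Γ : Ctx) (ξ : Model) (ρ : Env) : Prop :=
  (∀ p ∈ ξ, FV p.2 = ∅) ∧
    ∀ x α, lookupVar Γ x = some α → ∃ N, ξ.lookup x = some N ∧ TmRel α N (ρ x α)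

variable {Γ : Ctx} {ξ : Model} {ρ : Env}

theorem EnvRel.nil (ρ : Env) : EnvRel [] [] ρ :=
  ⟨by simp, by simp [lookupVar]⟩

theorem EnvRel.update {x : ℕ} {α : Ty} {W : Tm} {d : sem α} (hρ : EnvRel Γ ξ ρ)
    (hW : FV W = ∅) (hWd : TmRel α W d) :
    EnvRel (Γ ++ [(x, α)]) (ξ.filter (x != ·.1) ++ [(x, W)]) (ρ.update x α d) := by
  refine ⟨fun p hp => ?_, fun y β hy => ?_⟩
  · rcases List.mem_append.1 hp with hp | hp
    · exact hρ.1 p (List.mem_of_mem_filter hp)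
    · simp_all
  · rw [lookupVar_append_singleton] at hy
    by_cases hxy : x = y
    · subst hxy
      obtain rfl := Option.some.inj ((if_pos rfl).symm.trans hy)
      exact ⟨W, by simp [List.lookup_append, lookup_filter_ne], by simpa [Env.update] using hWd⟩
    · obtain ⟨N, hN, hNd⟩ := hρ.2 y β (by simpa [hxy] using hy)
      refine ⟨N, ?_, ?_⟩
      · simp [List.lookup_append, lookup_filter_ne, Ne.symm hxy, hN]
      · simpa [Env.update, Function.update_of_ne (Ne.symm hxy)] using hNd

theorem EnvRel.FV_msubst_eq_empty (hρ : EnvRel Γ ξ ρ) {M : Tm} {α : Ty} (hM : Typed Γ M α) :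
    FV (msubst ξ M) = ∅ := by
  refine Finset.eq_empty_of_forall_notMem fun y hy => ?_
  obtain ⟨hyM, hyξ⟩ := mem_FV_msubst ξ hρ.1 hy
  obtain ⟨β, hβ⟩ := Option.isSome_iff_exists.1 (hM.isSome_lookupVar_of_mem_FV hyM)
  obtain ⟨N, hN, -⟩ := hρ.2 y β hβ
  simp [hyξ] at hN

def SemTyped (Γ : Ctx) (M : Tm) (α : Ty) : Prop :=
  ∃ f : Env → sem α, ∀ ρ ξ, EnvRel Γ ξ ρ → TmRel α (msubst ξ M) (f ρ)

variable {x : ℕ} {α β : Ty} {M N N₁ N₂ : Tm}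

theorem SemTyped.var (h : lookupVar Γ x = some α) : SemTyped Γ (.var x) α :=
  ⟨fun ρ => ρ x α, fun ρ ξ hρ => by
    obtain ⟨N, hN, hNd⟩ := hρ.2 x α h
    rwa [msubst_var ξ hρ.1, hN]⟩

theorem SemTyped.of_valRel {V : Tm} {d : sem α} (hV : ValRel α V d) : SemTyped Γ V α :=
  ⟨fun _ => d, fun _ ξ _ => by
    rw [msubst_eq_self_of_FV_eq_empty ξ hV.isValue_and_FV_eq_empty.2]; exact .of_valRel hV⟩

theorem SemTyped.lam (hM : Typed (Γ ++ [(x, α)]) M β) (ihM : SemTyped (Γ ++ [(x, α)]) M β) :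
    SemTyped Γ (.lam x α M) (.arrow α β) := by
  obtain ⟨f, hf⟩ := ihM
  refine ⟨fun ρ d => f (ρ.update x α d), fun ρ ξ hρ => ?_⟩
  have hclosed := hρ.FV_msubst_eq_empty (.lam hM)
  rw [msubst_lam] at hclosed ⊢
  refine .of_valRel ⟨hclosed, x, α, _, rfl, fun W d hW => ?_⟩
  have := hf _ _ (hρ.update hW.isValue_and_FV_eq_empty.2 (.of_valRel hW))
  rwa [msubst_append] at this

theorem SemTyped.app (hM : SemTyped Γ M (.arrow α β)) (hN : SemTyped Γ N α) :
    SemTyped Γ (.app M N) β :=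
  let ⟨f, hf⟩ := hM; let ⟨g, hg⟩ := hN
  ⟨fun ρ => f ρ (g ρ), fun ρ ξ hρ => by
    rw [msubst_app]; exact (hf ρ ξ hρ).app (hg ρ ξ hρ)⟩

theorem SemTyped.pair (hM : SemTyped Γ M α) (hN : SemTyped Γ N β) :
    SemTyped Γ (.pair M N) (.prod α β) :=
  let ⟨f, hf⟩ := hM; let ⟨g, hg⟩ := hN
  ⟨fun ρ => (f ρ, g ρ), fun ρ ξ hρ => by
    rw [msubst_pair]; exact (hf ρ ξ hρ).pair (hg ρ ξ hρ)⟩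

theorem SemTyped.fst (hM : SemTyped Γ M (.prod α β)) : SemTyped Γ (.fst M) α :=
  let ⟨f, hf⟩ := hM
  ⟨fun ρ => (f ρ).1, fun ρ ξ hρ => by rw [msubst_fst]; exact (hf ρ ξ hρ).fst⟩

theorem SemTyped.snd (hM : SemTyped Γ M (.prod α β)) : SemTyped Γ (.snd M) β :=
  let ⟨f, hf⟩ := hM
  ⟨fun ρ => (f ρ).2, fun ρ ξ hρ => by rw [msubst_snd]; exact (hf ρ ξ hρ).snd⟩

theorem SemTyped.cond (hM : SemTyped Γ M .bool) (hN₁ : SemTyped Γ N₁ α)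
    (hN₂ : SemTyped Γ N₂ α) : SemTyped Γ (.cond M N₁ N₂) α :=
  let ⟨f, hf⟩ := hM; let ⟨g₁, hg₁⟩ := hN₁; let ⟨g₂, hg₂⟩ := hN₂
  ⟨fun ρ => bif f ρ then g₁ ρ else g₂ ρ, fun ρ ξ hρ => by
    rw [msubst_cond]; exact (hf ρ ξ hρ).cond (hg₁ ρ ξ hρ) (hg₂ ρ ξ hρ)⟩

theorem SemTyped.letin (hM : SemTyped Γ M α) (hN : SemTyped (Γ ++ [(x, α)]) N β) :
    SemTyped Γ (.letin x M N) β := by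
  obtain ⟨f, hf⟩ := hM
  obtain ⟨g, hg⟩ := hN
  refine ⟨fun ρ => g (ρ.update x α (f ρ)), fun ρ ξ hρ => ?_⟩
  rw [msubst_letin]
  refine (hf ρ ξ hρ).letin fun W hW => ?_
  have := hg _ _ (hρ.update hW.isValue_and_FV_eq_empty.2 (.of_valRel hW))
  rwa [msubst_append] at this

theorem SemTyped.eqNm (hM : SemTyped Γ M .nm) : SemTyped Γ (.eq M N) .bool :=
  let ⟨_, hf⟩ := hM
  ⟨fun _ => default, fun ρ ξ hρ => let ⟨_, _, hR⟩ := hf ρ ξ hρ; hR.elim⟩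

theorem SemTyped.eqBool (hM : SemTyped Γ M .bool) (hN : SemTyped Γ N .bool) :
    SemTyped Γ (.eq M N) .bool :=
  let ⟨f, hf⟩ := hM; let ⟨g, hg⟩ := hN
  ⟨fun ρ => f ρ == g ρ, fun ρ ξ hρ => by
    rw [msubst_eq]; exact (hf ρ ξ hρ).eq (hg ρ ξ hρ)⟩

theorem Typed.semTyped {M : Tm} (h : Typed Γ M α) (hM : IsStlc M) : SemTyped Γ M α := by
  induction h with
  | var h => exact .var h
  | unit => exact .of_valRel (d := ()) rfl
  | tt => exact .of_valRel (d := true) rfl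
  | ff => exact .of_valRel (d := false) rfl
  | name => exact absurd hM.1 (by simp [AN])
  | gensym => exact hM.2.elim
  | lam h ih => exact .lam h (ih hM)
  | app _ _ ihM ihN => exact (ihM (isStlc_app.1 hM).1).app (ihN (isStlc_app.1 hM).2)
  | pair _ _ ihM ihN => exact (ihM (isStlc_pair.1 hM).1).pair (ihN (isStlc_pair.1 hM).2)
  | fst _ ih => exact (ih hM).fst
  | snd _ ih => exact (ih hM).snd
  | cond _ _ _ ihM ih₁ ih₂ =>
    obtain ⟨h, h₁, h₂⟩ := isStlc_cond.1 hM
    exact (ihM h).cond (ih₁ h₁) (ih₂ h₂)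
  | letin _ _ ihM ihN => exact (ihM (isStlc_letin.1 hM).1).letin (ihN (isStlc_letin.1 hM).2)
  | eqNm _ _ ihM => exact (ihM (isStlc_eq.1 hM).1).eqNm
  | eqBool _ _ ihM ihN => exact (ihM (isStlc_eq.1 hM).1).eqBool (ihN (isStlc_eq.1 hM).2)

end Fundamental

theorem Typed.exists_tmRel {M : Tm} {α : Ty} (h : Typed [] M α) (hM : IsStlc M) :
    ∃ d, TmRel α M d :=
  let ⟨f, hf⟩ := h.semTyped hM
  ⟨f fun _ _ => default, hf _ [] (.nil _)⟩

theorem exists_eval_boolVal_iff {N : Tm} {c : Bool} (hN : NoGensym N) (h : TmRel .bool N c)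
    (b : Bool) : (∃ G', Eval ∅ N G' (boolVal b)) ↔ b = c := by
  obtain ⟨_, hV, rfl⟩ := h
  refine ⟨fun ⟨_, hV'⟩ => ?_, fun hb => ⟨_, hb ▸ hV⟩⟩
  have := (hV.det hN hV').2
  cases b <;> cases c <;> first | rfl | cases this

theorem exists_eval_subst_iff_of_tmRel {α : Ty} {M N : Tm} {d : sem α}
    (hMc : FV M = ∅) (hMs : NoGensym M) (hM : TmRel α M d)
    (hNc : FV N = ∅) (hNs : NoGensym N) (hN : TmRel α N d)
    {h : ℕ} {C : Tm} (hC : Typed [(h, α)] C .bool) (hCs : IsStlc C) (b : Bool) :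
    (∃ G', Eval ∅ (subst h M C) G' (boolVal b)) ↔
      (∃ G', Eval ∅ (subst h N C) G' (boolVal b)) := by
  obtain ⟨g, hg⟩ := hC.semTyped hCs
  let ρ : Env := Env.update (fun _ _ => default) h α d
  rw [exists_eval_boolVal_iff (hMs.subst hCs.2) (hg ρ _ ((EnvRel.nil _).update hMc hM)),
    exists_eval_boolVal_iff (hNs.subst hCs.2) (hg ρ _ ((EnvRel.nil _).update hNc hN))]

/-- For every Nm-free simple type α there is a finite list of closed
STLC values of type α such that every closed STLC term of type α is contextually
equivalent (w.r.t. STLC contexts) to some value in the list. -/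
theorem stlc_finitely_many_values_up_to_ctx_equiv :
    ∀ α : Ty, NmFreeTy α →
      ∃ L : List Tm,
        (∀ V ∈ L, IsValue V ∧ Typed [] V α ∧ AN V = ∅ ∧ NoGensym V) ∧
        ∀ M : Tm, Typed [] M α → AN M = ∅ → NoGensym M →
          ∃ V ∈ L, ∀ (h : ℕ) (C : Tm) (b : Bool),
            Typed [(h, α)] C .bool → AN C = ∅ → NoGensym C →
            ((∃ G', Eval ∅ (subst h M C) G' (boolVal b)) ↔
             (∃ G', Eval ∅ (subst h V C) G' (boolVal b))) := by
  intro α hα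
  refine ⟨(sem.enum α).map (reify α), ?_, fun M hM hMAN hMNG => ?_⟩
  · simp only [List.mem_map]
    rintro _ ⟨d, -, rfl⟩
    exact ⟨isValue_reify α d, typed_reify hα d [], isStlc_reify α d⟩
  · obtain ⟨d, hd⟩ := hM.exists_tmRel ⟨hMAN, hMNG⟩
    refine ⟨reify α d, List.mem_map_of_mem (sem.mem_enum d), fun h C b hC hCAN hCNG => ?_⟩
    exact exists_eval_subst_iff_of_tmRel hM.FV_eq_empty hMNG hd (FV_reify hα d)
      (isStlc_reify α d).2 (.of_valRel (valRel_reify hα d)) hC ⟨hCAN, hCNG⟩ b
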